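/- The intersection 𝔱𝔪₁ ∩ 𝔉₂ is closed under the bracket {Ψ₁, Ψ₂}₁ = d_{Ψ₁}(Ψ₂) − d_{Ψ₂}(Ψ₁); i.e., if Ψ₁, Ψ₂ are Lie(-primitive) elements lying in 𝔱𝔪₁, then so is {Ψ₁, Ψ₂}₁. In particular it suffices to show that d_{Ψ₁}(Ψ₂) is primitive for Δ_⧢ whenever Ψ₁, Ψ₂ are primitive. -/
import Mathlib


/-- Words in the letters x₀, x₁ (0 ↦ x₀, 1 ↦ x₁). -/
abbrev W : Type := List (Fin 2)

/-- 𝔥^∨ = ℚ⟨⟨x₀,x₁⟩⟩, the completed free associative ℚ-algebra on x₀, x₁, realized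
as the space of coefficient functions on words; `Φ w` is the coefficient ⟨Φ | w⟩. -/
abbrev NC : Type := W → ℚ

/-- The generator x₀ as a series. -/
def x0 : NC := fun w => if w = [(0 : Fin 2)] then 1 else 0

/-- The generator x₁ as a series. -/
def x1 : NC := fun w => if w = [(1 : Fin 2)] then 1 else 0

/-- The unit 1 of ℚ⟨⟨x₀,x₁⟩⟩. -/
def nc1 : NC := fun w => if w = [] then 1 else 0

/-- The (concatenation) product of series: ⟨f·g | w⟩ = Σ_{w = uv} ⟨f|u⟩⟨g|v⟩. -/
def cmul (f g : NC) : NC := fun w =>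
  ∑ i ∈ Finset.range (w.length + 1), f (w.take i) * g (w.drop i)

/-- Shuffle of two words, as a list of words with multiplicity. -/
def sh : W → W → List W
  | [], v => [v]
  | u, [] => [u]
  | a :: u, b :: v =>
      ((sh u (b :: v)).map (a :: ·)) ++ ((sh (a :: u) v).map (b :: ·))
termination_by u v => u.length + v.length

/-- ⟨Φ | u ⧢ v⟩, the pairing of Φ with the shuffle of the words u and v. -/
def shPair (Φ : NC) (u v : W) : ℚ := ((sh u v).map Φ).sum

/-- Ψ is primitive for the shuffle coproduct: Δ_⧢(Ψ) = Ψ ⊗ 1 + 1 ⊗ Ψ, i.e.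
the (u,v)-coefficient ⟨Ψ | u ⧢ v⟩ of Δ_⧢(Ψ) equals that of Ψ ⊗ 1 + 1 ⊗ Ψ. -/
def primitiveSh (Ψ : NC) : Prop :=
  ∀ u v : W,
    shPair Ψ u v = Ψ u * (if v = [] then 1 else 0) + (if u = [] then 1 else 0) * Ψ v

/-- d_Ψ(Φ), where d_Ψ is the continuous derivation of ℚ⟨⟨x₀,x₁⟩⟩ with d_Ψ(x₀) = 0 and
d_Ψ(x₁) = Ψ: the coefficient at w sums, over all ways of writing w = u m v so that
u x₁ v is a word and m replaces that occurrence of x₁, the value ⟨Φ | u x₁ v⟩⟨Ψ | m⟩. -/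
def der (Ψ Φ : NC) : NC := fun w =>
  ∑ a ∈ Finset.range (w.length + 1), ∑ b ∈ Finset.range (w.length + 1 - a),
    Φ (w.take a ++ (1 : Fin 2) :: w.drop (a + b)) * Ψ ((w.drop a).take b)

/-- The bracket {Ψ₁, Ψ₂}₁ = d_{Ψ₁}(Ψ₂) − d_{Ψ₂}(Ψ₁). -/
def br (Ψ₁ Ψ₂ : NC) : NC := der Ψ₁ Ψ₂ - der Ψ₂ Ψ₁

/-- Membership in 𝔱𝔪₁: ⟨Ψ | x₁⟩ = 0 and ⟨Ψ | x₀^l⟩ = 0 for all l ≥ 0. -/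
def tm1mem (Ψ : NC) : Prop :=
  Ψ [(1 : Fin 2)] = 0 ∧ ∀ l : ℕ, Ψ (List.replicate l (0 : Fin 2)) = 0

def lsum {α : Type*} (l : List α) (f : α → ℚ) : ℚ := (l.map f).sum

@[simp] lemma lsum_nil {α : Type*} (f : α → ℚ) : lsum ([] : List α) f = 0 := rfl
@[simp] lemma lsum_cons {α : Type*} (a : α) (l : List α) (f : α → ℚ) :
    lsum (a :: l) f = f a + lsum l f := by simp [lsum]
@[simp] lemma lsum_append {α : Type*} (l₁ l₂ : List α) (f : α → ℚ) :
    lsum (l₁ ++ l₂) f = lsum l₁ f + lsum l₂ f := by simp [lsum]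
@[simp] lemma lsum_map {α β : Type*} (g : α → β) (l : List α) (f : β → ℚ) :
    lsum (l.map g) f = lsum l (fun x => f (g x)) := by simp [lsum, Function.comp_def]
lemma lsum_congr {α : Type*} {l : List α} {f g : α → ℚ} (h : ∀ x ∈ l, f x = g x) :
    lsum l f = lsum l g := by
  unfold lsum; rw [List.map_congr_left h]
lemma lsum_add {α : Type*} (l : List α) (f g : α → ℚ) :
    lsum l (fun x => f x + g x) = lsum l f + lsum l g := by
  induction l with
  | nil => simp
  | cons a l ih => simp [ih]; ring
lemma lsum_sub {α : Type*} (l : List α) (f g : α → ℚ) :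
    lsum l (fun x => f x - g x) = lsum l f - lsum l g := by
  induction l with
  | nil => simp
  | cons a l ih => simp [ih]; ring
lemma lsum_mul_const {α : Type*} (l : List α) (f : α → ℚ) (c : ℚ) :
    lsum l (fun x => f x * c) = lsum l f * c := by
  induction l with
  | nil => simp
  | cons a l ih => simp [ih]; ring
lemma lsum_const_mul {α : Type*} (l : List α) (f : α → ℚ) (c : ℚ) :
    lsum l (fun x => c * f x) = c * lsum l f := by
  induction l with
  | nil => simp
  | cons a l ih => simp [ih]; ring
@[simp] lemma lsum_zero {α : Type*} (l : List α) : lsum l (fun _ => (0:ℚ)) = 0 := by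
  induction l <;> simp [*]
lemma lsum_flatMap {α β : Type*} (l : List α) (g : α → List β) (f : β → ℚ) :
    lsum (l.flatMap g) f = lsum l (fun x => lsum (g x) f) := by
  induction l with
  | nil => rfl
  | cons a l ih => simp [List.flatMap_cons, ih]

@[simp] lemma sh_nil_left (v : W) : sh [] v = [v] := by simp [sh]
@[simp] lemma sh_nil_right (u : W) : sh u [] = [u] := by cases u <;> simp [sh]
lemma sh_cons_cons (a b : Fin 2) (u v : W) :
    sh (a :: u) (b :: v) = ((sh u (b :: v)).map (a :: ·)) ++ ((sh (a :: u) v).map (b :: ·)) := by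
  simp [sh]

def ssum (f : NC) (u v : W) : ℚ := lsum (sh u v) f

@[simp] lemma ssum_nil_left (f : NC) (v : W) : ssum f [] v = f v := by simp [ssum]
@[simp] lemma ssum_nil_right (f : NC) (u : W) : ssum f u [] = f u := by simp [ssum]
lemma ssum_cons_cons (f : NC) (a b : Fin 2) (u v : W) :
    ssum f (a :: u) (b :: v)
      = ssum (fun w => f (a :: w)) u (b :: v) + ssum (fun w => f (b :: w)) (a :: u) v := by
  simp [ssum, sh_cons_cons]

lemma ssum_comm' (u : W) : ∀ (v : W) (f : NC), ssum f u v = ssum f v u := by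
  induction u with
  | nil => intro v f; cases v <;> simp
  | cons a u ihu =>
    intro v
    induction v with
    | nil => intro f; simp
    | cons b v ihv =>
      intro f
      rw [ssum_cons_cons, ssum_cons_cons, ihu (b :: v), ihv]
      ring

lemma ssum_comm (f : NC) (u v : W) : ssum f u v = ssum f v u := ssum_comm' u v f

def splits : W → List (W × W)
  | [] => [([], [])]
  | a :: w => ([], a :: w) :: (splits w).map (fun p => (a :: p.1, p.2))

def trips (w : W) : List (W × W × W) :=
  (splits w).flatMap (fun pr => (splits pr.2).map (fun ms => (pr.1, ms.1, ms.2)))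

@[simp] lemma splits_nil : splits [] = [([], [])] := rfl
lemma splits_cons (a : Fin 2) (w : W) :
    splits (a :: w) = ([], a :: w) :: (splits w).map (fun p => (a :: p.1, p.2)) := rfl

@[simp] lemma trips_nil : trips [] = [([], [], [])] := rfl
lemma lsum_trips (w : W) (F : W × W × W → ℚ) :
    lsum (trips w) F = lsum (splits w) (fun pr => lsum (splits pr.2) (fun ms => F (pr.1, ms.1, ms.2))) := by
  simp [trips, lsum_flatMap]

lemma lsum_trips_cons (a : Fin 2) (w : W) (F : W × W × W → ℚ) :
    lsum (trips (a :: w)) F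
      = lsum (splits (a :: w)) (fun ms => F ([], ms.1, ms.2))
        + lsum (trips w) (fun t => F (a :: t.1, t.2.1, t.2.2)) := by
  simp only [lsum_trips, splits_cons, lsum_cons, lsum_map]

/-- The key "split at inserted letter" lemma, base case. -/
lemma ssum_cons_left (c : Fin 2) (u₂ : W) :
    ∀ (v : W) (f : NC), ssum f (c :: u₂) v
      = lsum (splits v) (fun p => ssum (fun z₂ => f (p.1 ++ c :: z₂)) u₂ p.2) := by
  intro v
  induction v with
  | nil => intro f; simp
  | cons b v ihv =>
    intro f
    rw [ssum_cons_cons, splits_cons, lsum_cons, lsum_map, ihv]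
    simp only [List.nil_append, List.cons_append]

lemma ssum_insert (c : Fin 2) : ∀ (u₁ : W), ∀ (v : W), ∀ (u₂ : W) (f : NC),
    ssum f (u₁ ++ c :: u₂) v
      = lsum (splits v) (fun p => ssum (fun z₁ => ssum (fun z₂ => f (z₁ ++ c :: z₂)) u₂ p.2) u₁ p.1) := by
  intro u₁
  induction u₁ with
  | nil =>
    intro v u₂ f
    rw [List.nil_append, ssum_cons_left]
    exact lsum_congr (fun p _ => by rw [ssum_nil_left])
  | cons a u₁ ihu =>
    intro v
    induction v with
    | nil =>
      intro u₂ f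
      simp
    | cons b v ihv =>
      intro u₂ f
      show ssum f (a :: (u₁ ++ c :: u₂)) (b :: v) = _
      rw [ssum_cons_cons, ihu (b :: v) u₂ (fun w => f (a :: w)),
        show a :: (u₁ ++ c :: u₂) = (a :: u₁) ++ c :: u₂ from rfl,
        ihv u₂ (fun w => f (b :: w))]
      simp only [splits_cons, lsum_cons, lsum_map, ssum_cons_cons, ssum_nil_right,
        ssum_nil_left, lsum_add, List.cons_append, List.nil_append]
      ring

lemma ssum_add (f g : NC) (u v : W) :
    ssum (fun w => f w + g w) u v = ssum f u v + ssum g u v := lsum_add _ _ _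

lemma ssum_mul_const (f : NC) (c : ℚ) (u v : W) :
    ssum (fun w => f w * c) u v = ssum f u v * c := lsum_mul_const _ _ _

lemma Hlem (Φ : NC) : ∀ (u v : W) (Ψ : NC),
    ssum (fun w => lsum (splits w) (fun p => Φ ((1:Fin 2) :: p.2) * Ψ p.1)) u v
      = lsum (splits u) (fun pu => lsum (splits v) (fun pv =>
          ssum (fun z₂ => Φ ((1:Fin 2) :: z₂)) pu.2 pv.2 * ssum Ψ pu.1 pv.1)) := by
  intro u
  induction u with
  | nil => intro v Ψ; simp
  | cons a u ihu =>
    intro v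
    induction v with
    | nil => intro Ψ; simp
    | cons b v ihv =>
      intro Ψ
      have h1 := ihu (b :: v) (fun m => Ψ (a :: m))
      have h2 := ihv (fun m => Ψ (b :: m))
      rw [ssum_cons_cons]
      simp only [splits_cons, lsum_cons, lsum_map, ssum_add, ssum_mul_const, ssum_cons_cons,
        ssum_nil_left, ssum_nil_right, mul_add, add_mul, lsum_add, h1, h2,
        List.cons_append, List.nil_append]
      ring

def derL (Φ Ψ : NC) (w : W) : ℚ :=
  lsum (trips w) (fun t => Φ (t.1 ++ (1:Fin 2) :: t.2.2) * Ψ t.2.1)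

lemma derL_cons (Φ Ψ : NC) (a : Fin 2) (w : W) :
    derL Φ Ψ (a :: w)
      = lsum (splits (a :: w)) (fun p => Φ ((1:Fin 2) :: p.2) * Ψ p.1)
        + derL (fun x => Φ (a :: x)) Ψ w := by
  unfold derL
  rw [lsum_trips_cons]
  simp only [List.nil_append, List.cons_append]

lemma Mlem (Ψ : NC) : ∀ (u v : W) (Φ : NC),
    ssum (derL Φ Ψ) u v
      = lsum (trips u) (fun tu => lsum (trips v) (fun tv =>
          ssum (fun z₁ => ssum (fun z₂ => Φ (z₁ ++ (1:Fin 2) :: z₂)) tu.2.2 tv.2.2) tu.1 tv.1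
            * ssum Ψ tu.2.1 tv.2.1)) := by
  intro u
  induction u with
  | nil => intro v Φ; simp [derL, List.nil_append]
  | cons a u ihu =>
    intro v
    induction v with
    | nil => intro Φ; simp [derL]
    | cons b v ihv =>
      intro Φ
      have h1 := ihu (b :: v) (fun x => Φ (a :: x))
      have h2 := ihv (fun x => Φ (b :: x))
      have hH := Hlem Φ (a :: u) (b :: v) Ψ
      rw [ssum_cons_cons] at hH
      rw [ssum_cons_cons]
      simp only [lsum_trips_cons, splits_cons, lsum_cons, lsum_map, derL_cons, ssum_add,
        ssum_cons_cons, ssum_nil_left, ssum_nil_right, ssum_mul_const, mul_add, add_mul,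
        lsum_add, h1, h2, List.cons_append, List.nil_append] at hH ⊢
      linarith [hH]

lemma lsum_lsum_comm {α β : Type*} (l : List α) (m : List β) (f : α → β → ℚ) :
    lsum l (fun x => lsum m (f x)) = lsum m (fun y => lsum l (fun x => f x y)) := by
  induction l with
  | nil => simp
  | cons a l ih => simp only [lsum_cons, ih, lsum_add]

lemma lsum_splits_fst_nil (r : W) (G : W × W → ℚ) :
    lsum (splits r) (fun ms => G ms * (if ms.1 = [] then (1:ℚ) else 0)) = G ([], r) := by
  cases r with
  | nil => simp
  | cons a r => simp [splits_cons]

lemma lsum_trips_mid_nil (w : W) (F : W × W × W → ℚ) :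
    lsum (trips w) (fun t => F t * (if t.2.1 = [] then (1:ℚ) else 0))
      = lsum (splits w) (fun p => F (p.1, [], p.2)) := by
  rw [lsum_trips]
  exact lsum_congr (fun pr _ => lsum_splits_fst_nil pr.2 (fun ms => F (pr.1, ms.1, ms.2)))

lemma splits_eq (w : W) :
    splits w = (List.range (w.length + 1)).map (fun i => (w.take i, w.drop i)) := by
  induction w with
  | nil => simp
  | cons a w ih =>
    rw [splits_cons, ih, List.length_cons]
    conv_rhs => rw [List.range_succ_eq_map]
    simp [List.map_map, Function.comp_def]

lemma lsum_range (n : ℕ) (f : ℕ → ℚ) : lsum (List.range n) f = ∑ i ∈ Finset.range n, f i := by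
  induction n with
  | zero => simp
  | succ n ih => rw [List.range_succ, Finset.sum_range_succ, lsum_append, ih]; simp

lemma der_eq_derL (Ψ Φ : NC) (w : W) : der Ψ Φ w = derL Φ Ψ w := by
  unfold der derL
  rw [lsum_trips, splits_eq, lsum_map, lsum_range]
  apply Finset.sum_congr rfl
  intro a ha
  have ha' : a ≤ w.length := Nat.lt_succ_iff.mp (Finset.mem_range.mp ha)
  rw [splits_eq, lsum_map, lsum_range]
  have hlen : (w.drop a).length = w.length - a := by simp
  rw [hlen, show w.length + 1 - a = w.length - a + 1 by omega]
  apply Finset.sum_congr rfl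
  intro b _
  have : (w.drop a).drop b = w.drop (a + b) := by
    rw [List.drop_drop, Nat.add_comm]
  rw [this]

lemma prim_nil {Ψ : NC} (h : primitiveSh Ψ) : Ψ [] = 0 := by
  have := h [] []
  simp [shPair] at this
  linarith

theorem der_prim (Ψ₁ Ψ₂ : NC) (h1 : primitiveSh Ψ₁) (h2 : primitiveSh Ψ₂) :
    primitiveSh (der Ψ₁ Ψ₂) := by
  have hp1 : ∀ a b : W, ssum Ψ₁ a b
      = Ψ₁ a * (if b = [] then 1 else 0) + (if a = [] then 1 else 0) * Ψ₁ b := fun a b => h1 a b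
  have hp2 : ∀ a b : W, ssum Ψ₂ a b
      = Ψ₂ a * (if b = [] then 1 else 0) + (if a = [] then 1 else 0) * Ψ₂ b := fun a b => h2 a b
  intro u v
  have e : shPair (der Ψ₁ Ψ₂) u v = ssum (derL Ψ₂ Ψ₁) u v :=
    lsum_congr (fun w _ => der_eq_derL Ψ₁ Ψ₂ w)
  rw [e, Mlem Ψ₁ u v Ψ₂]
  simp only [hp1, mul_add, lsum_add]
  have hS1 : lsum (trips u) (fun tu => lsum (trips v) (fun tv =>
        ssum (fun z₁ => ssum (fun z₂ => Ψ₂ (z₁ ++ (1:Fin 2) :: z₂)) tu.2.2 tv.2.2) tu.1 tv.1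
          * (Ψ₁ tu.2.1 * (if tv.2.1 = [] then 1 else 0))))
      = derL Ψ₂ Ψ₁ u * (if v = [] then 1 else 0) := by
    have step : ∀ tu : W × W × W, lsum (trips v) (fun tv =>
        ssum (fun z₁ => ssum (fun z₂ => Ψ₂ (z₁ ++ (1:Fin 2) :: z₂)) tu.2.2 tv.2.2) tu.1 tv.1
          * (Ψ₁ tu.2.1 * (if tv.2.1 = [] then 1 else 0)))
        = Ψ₂ (tu.1 ++ (1:Fin 2) :: tu.2.2) * (if v = [] then 1 else 0) * Ψ₁ tu.2.1 := by
      intro tu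
      rw [lsum_congr (fun tv _ => by ring :
        ∀ tv ∈ trips v, ssum (fun z₁ => ssum (fun z₂ => Ψ₂ (z₁ ++ (1:Fin 2) :: z₂)) tu.2.2 tv.2.2) tu.1 tv.1
          * (Ψ₁ tu.2.1 * (if tv.2.1 = [] then 1 else 0))
        = (ssum (fun z₁ => ssum (fun z₂ => Ψ₂ (z₁ ++ (1:Fin 2) :: z₂)) tu.2.2 tv.2.2) tu.1 tv.1
          * Ψ₁ tu.2.1) * (if tv.2.1 = [] then 1 else 0))]
      rw [lsum_trips_mid_nil v (fun tv =>
        ssum (fun z₁ => ssum (fun z₂ => Ψ₂ (z₁ ++ (1:Fin 2) :: z₂)) tu.2.2 tv.2.2) tu.1 tv.1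
          * Ψ₁ tu.2.1)]
      rw [lsum_mul_const, ← ssum_insert 1 tu.1 v tu.2.2 Ψ₂, hp2]
      have hne : (tu.1 ++ (1:Fin 2) :: tu.2.2) ≠ [] := by simp
      simp only [hne, if_false]
      ring
    rw [lsum_congr (fun tu _ => step tu)]
    unfold derL
    rw [← lsum_mul_const]
    exact lsum_congr (fun tu _ => by ring)
  have hS2 : lsum (trips u) (fun tu => lsum (trips v) (fun tv =>
        ssum (fun z₁ => ssum (fun z₂ => Ψ₂ (z₁ ++ (1:Fin 2) :: z₂)) tu.2.2 tv.2.2) tu.1 tv.1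
          * ((if tu.2.1 = [] then 1 else 0) * Ψ₁ tv.2.1)))
      = (if u = [] then 1 else 0) * derL Ψ₂ Ψ₁ v := by
    have step1 : ∀ tu : W × W × W, lsum (trips v) (fun tv =>
        ssum (fun z₁ => ssum (fun z₂ => Ψ₂ (z₁ ++ (1:Fin 2) :: z₂)) tu.2.2 tv.2.2) tu.1 tv.1
          * ((if tu.2.1 = [] then 1 else 0) * Ψ₁ tv.2.1))
        = (lsum (trips v) (fun tv =>
            ssum (fun z₁ => ssum (fun z₂ => Ψ₂ (z₁ ++ (1:Fin 2) :: z₂)) tu.2.2 tv.2.2) tu.1 tv.1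
              * Ψ₁ tv.2.1)) * (if tu.2.1 = [] then 1 else 0) := by
      intro tu
      rw [← lsum_mul_const]
      exact lsum_congr (fun tv _ => by ring)
    rw [lsum_congr (fun tu _ => step1 tu)]
    rw [lsum_trips_mid_nil u (fun tu => lsum (trips v) (fun tv =>
        ssum (fun z₁ => ssum (fun z₂ => Ψ₂ (z₁ ++ (1:Fin 2) :: z₂)) tu.2.2 tv.2.2) tu.1 tv.1
          * Ψ₁ tv.2.1))]
    rw [lsum_lsum_comm]
    have step2 : ∀ tv : W × W × W,
        lsum (splits u) (fun p =>
          ssum (fun z₁ => ssum (fun z₂ => Ψ₂ (z₁ ++ (1:Fin 2) :: z₂)) p.2 tv.2.2) p.1 tv.1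
            * Ψ₁ tv.2.1)
        = Ψ₂ (tv.1 ++ (1:Fin 2) :: tv.2.2) * (if u = [] then 1 else 0) * Ψ₁ tv.2.1 := by
      intro tv
      rw [lsum_mul_const]
      have key : lsum (splits u) (fun p =>
          ssum (fun z₁ => ssum (fun z₂ => Ψ₂ (z₁ ++ (1:Fin 2) :: z₂)) p.2 tv.2.2) p.1 tv.1)
          = ssum Ψ₂ (tv.1 ++ (1:Fin 2) :: tv.2.2) u := by
        rw [ssum_insert]
        refine lsum_congr (fun p _ => ?_)
        rw [ssum_comm]
        congr 1
        funext z₁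
        rw [ssum_comm]
      rw [key, hp2]
      have hne : (tv.1 ++ (1:Fin 2) :: tv.2.2) ≠ [] := by simp
      simp only [hne, if_false]
      ring
    rw [lsum_congr (fun tv _ => step2 tv)]
    unfold derL
    rw [← lsum_const_mul]
    exact lsum_congr (fun tv _ => by ring)
  rw [hS1, hS2, der_eq_derL, der_eq_derL]


lemma prim_sub (f g : NC) (hf : primitiveSh f) (hg : primitiveSh g) :
    primitiveSh (f - g) := by
  intro u v
  have e : shPair (f - g) u v = shPair f u v - shPair g u v := by
    have : shPair (f - g) u v = lsum (sh u v) (fun w => f w - g w) :=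
      lsum_congr (fun w _ => rfl)
    rw [this, lsum_sub]; rfl
  rw [e, hf u v, hg u v]
  have : (f - g) u = f u - g u := rfl
  rw [this, show (f - g) v = f v - g v from rfl]
  ring

lemma der_replicate (Ψ Φ : NC) (hΨ : ∀ l, Ψ (List.replicate l (0:Fin 2)) = 0) (l : ℕ) :
    der Ψ Φ (List.replicate l (0:Fin 2)) = 0 := by
  unfold der
  apply Finset.sum_eq_zero
  intro a _
  apply Finset.sum_eq_zero
  intro b _
  have : ((List.replicate l (0:Fin 2)).drop a).take b = List.replicate (min b (l - a)) (0:Fin 2) := by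
    simp [List.drop_replicate, List.take_replicate]
  rw [this, hΨ, mul_zero]

lemma der_x1 (Ψ Φ : NC) (h0 : Ψ [] = 0) (h1 : Ψ [(1:Fin 2)] = 0) :
    der Ψ Φ [(1:Fin 2)] = 0 := by
  simp [der, Finset.sum_range_succ, h0, h1]

/-- 𝔱𝔪₁ ∩ 𝔉₂ is closed under {−,−}₁; and indeed d_{Ψ₁}(Ψ₂) is primitive for Δ_⧢
whenever Ψ₁ and Ψ₂ are primitive. -/
theorem tm1_inter_F2_closed :
    (∀ Ψ₁ Ψ₂ : NC, tm1mem Ψ₁ → primitiveSh Ψ₁ → tm1mem Ψ₂ → primitiveSh Ψ₂ →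
      tm1mem (br Ψ₁ Ψ₂) ∧ primitiveSh (br Ψ₁ Ψ₂)) ∧
    (∀ Ψ₁ Ψ₂ : NC, primitiveSh Ψ₁ → primitiveSh Ψ₂ → primitiveSh (der Ψ₁ Ψ₂)) := by
  constructor
  · intro Ψ₁ Ψ₂ ht1 hp1 ht2 hp2
    refine ⟨⟨?_, ?_⟩, ?_⟩
    · show der Ψ₁ Ψ₂ [(1:Fin 2)] - der Ψ₂ Ψ₁ [(1:Fin 2)] = 0
      rw [der_x1 Ψ₁ Ψ₂ (prim_nil hp1) ht1.1, der_x1 Ψ₂ Ψ₁ (prim_nil hp2) ht2.1]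
      ring
    · intro l
      show der Ψ₁ Ψ₂ (List.replicate l (0:Fin 2)) - der Ψ₂ Ψ₁ (List.replicate l (0:Fin 2)) = 0
      rw [der_replicate Ψ₁ Ψ₂ ht1.2 l, der_replicate Ψ₂ Ψ₁ ht2.2 l]
      ring
    · exact prim_sub _ _ (der_prim _ _ hp1 hp2) (der_prim _ _ hp2 hp1)
  · exact fun Ψ₁ Ψ₂ h1 h2 => der_prim Ψ₁ Ψ₂ h1 h2
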